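/- Let t: Σ* ⇀ Ω* be a rational function with suffix-closed domain X = dom(t). Then there exists a constant C (depending only on t) such that for all words u, v, w ∈ Σ* with uw, vw ∈ X and u R_t v, one has ‖t(uw), t(vw)‖ ≤ C·(|u| + |v| + 2). -/

import Mathlib

/-! Common definitions for sliding-window / visibly pushdown formalizations. -/

/-- `γ` grows polynomially: `γ(n) ∈ O(n^k)` for some `k`. -/
def GrowsPolynomially (γ : ℕ → ℕ) : Prop :=
  ∃ k C : ℕ, ∀ n : ℕ, γ n ≤ C * (n + 1) ^ k

/-- `γ` grows exponentially: there is `c > 1` with `γ(n) ≥ c^n` for infinitely many `n`. -/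
def GrowsExponentially (γ : ℕ → ℕ) : Prop :=
  ∃ c : ℝ, 1 < c ∧ ∀ m : ℕ, ∃ n : ℕ, m ≤ n ∧ c ^ n ≤ (γ n : ℝ)

/-- A set of words is suffix-closed. -/
def SuffixClosed {α : Type} (X : Set (List α)) : Prop :=
  ∀ x ∈ X, ∀ s : List α, s <:+ x → s ∈ X

/-- Domain of a partial function presented with `Option`. -/
def pdom {α β : Type} (t : List α → Option β) : Set (List α) := {x | t x ≠ none}

/-- The `t`-growth of `X`: the number of values of `t` on words of `X` of length at most `n`. -/
noncomputable def growthOf {α : Type} {Y : Type} (t : List α → Y) (X : Set (List α)) (n : ℕ) : ℕ :=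
  (t '' {x | x ∈ X ∧ x.length ≤ n}).ncard

/-- Growth of a language: number of its words of length at most `n`. -/
noncomputable def langGrowth {β : Type} (L : Set (List β)) (n : ℕ) : ℕ :=
  {y | y ∈ L ∧ y.length ≤ n}.ncard

/-- Suffix expansion of a (total or partial) function: the tuple of values on all
nonempty suffixes `a₁⋯aₙ, a₂⋯aₙ, …, aₙ` of the input. -/
def cev {α : Type} {Y : Type} (t : List α → Y) (x : List α) : List Y :=
  x.tails.dropLast.map t

/-- Image of `X` under the partial function `t`. -/
def optImage {α β : Type} (t : List α → Option β) (X : Set (List α)) : Set β :=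
  {y | ∃ x ∈ X, t x = some y}

/-- A language is bounded if it is contained in `w₁* w₂* ⋯ w_k*`. -/
def BoundedLang {β : Type} (L : Set (List β)) : Prop :=
  ∃ ws : List (List β), ∀ x ∈ L, ∃ ms : List ℕ, ms.length = ws.length ∧
    x = (List.zipWith (fun (w : List β) (m : ℕ) => (List.replicate m w).flatten) ws ms).flatten

/-- `{u,v}*`: all concatenations of copies of `u` and `v`. -/
def UVStar {α : Type} (u v : List α) : Set (List α) :=
  {w | ∃ l : List (List α), (∀ p ∈ l, p = u ∨ p = v) ∧ w = l.flatten}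

/-- `{u,v}^{≤ n}`: concatenations of at most `n` words, each equal to `u` or `v`. -/
def UVPow {α : Type} (u v : List α) (n : ℕ) : Set (List α) :=
  {w | ∃ l : List (List α), (∀ p ∈ l, p = u ∨ p = v) ∧ l.length ≤ n ∧ w = l.flatten}

/-- The set `{u₂,v₂}{u,v}* Z`. -/
def FoolingSet {α : Type} (u₂ v₂ u v : List α) (Z : Set (List α)) : Set (List α) :=
  {x | ∃ a w z, (a = u₂ ∨ a = v₂) ∧ w ∈ UVStar u v ∧ z ∈ Z ∧ x = a ++ (w ++ z)}

/-- Linear fooling scheme for a partial function `t`. -/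
def IsLinearFoolingScheme {α Y : Type} (t : List α → Option Y)
    (u₂ v₂ u v : List α) (Z : Set (List α)) : Prop :=
  u₂ <:+ u ∧ v₂ <:+ v ∧ u₂.length = v₂.length ∧
  FoolingSet u₂ v₂ u v Z ⊆ pdom t ∧
  ∃ C : ℕ, ∀ n : ℕ, ∃ z ∈ Z, z.length ≤ C * (n + 1) ∧
    ∀ w ∈ UVPow u v n, t (u₂ ++ (w ++ z)) ≠ t (v₂ ++ (w ++ z))

/-- `X` contains a linear fooling set for `t`. -/
def ContainsLinearFoolingSet {α Y : Type} (t : List α → Option Y) (X : Set (List α)) : Prop :=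
  ∃ u₂ v₂ u v Z, IsLinearFoolingScheme t u₂ v₂ u v Z ∧ FoolingSet u₂ v₂ u v Z ⊆ X

/-! ### Transducers and rational functions -/

/-- A finite-state transducer over `(α, β)` with terminal output function. -/
structure Transducer (α β : Type) where
  Q : Type
  finQ : Fintype Q
  I : Set Q
  F : Set Q
  Δ : Set (Q × List α × List β × Q)
  finΔ : Δ.Finite
  o : Q → List β

namespace Transducer

variable {α β : Type}

/-- A run from `p` to `r` with input `x` and output `y`. -/
inductive Run (A : Transducer α β) : A.Q → List α → List β → A.Q → Prop
  | nil (q : A.Q) : Run A q [] [] q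
  | cons {p q r : A.Q} {x₁ x : List α} {y₁ y : List β} :
      (p, x₁, y₁, q) ∈ A.Δ → Run A q x y r → Run A p (x₁ ++ x) (y₁ ++ y) r

/-- The transduction defined by a transducer. -/
def T (A : Transducer α β) : Set (List α × List β) :=
  {p | ∃ q₀ q y, q₀ ∈ A.I ∧ q ∈ A.F ∧ A.Run q₀ p.1 y q ∧ p.2 = y ++ A.o q}

end Transducer

/-- A partial function is rational if its graph is the transduction of some transducer. -/
def IsRationalFun {α β : Type} (t : List α → Option (List β)) : Prop :=
  ∃ A : Transducer α β, ∀ x y, t x = some y ↔ (x, y) ∈ A.T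

/-! ### Right congruences, suffix expansions, critical tuples -/

/-- A right congruence: an equivalence relation compatible with appending on the right. -/
def IsRightCongruence {α : Type} (r : List α → List α → Prop) : Prop :=
  Equivalence r ∧ ∀ x y z : List α, r x y → r (x ++ z) (y ++ z)

/-- Suffix expansion of a relation: words of the same length whose corresponding
nonempty suffixes are all related. -/
def SuffixExpansion {α : Type} (r : List α → List α → Prop) (x y : List α) : Prop :=
  x.length = y.length ∧ ∀ i < x.length, r (x.drop i) (y.drop i)

/-- Number of `r`-classes of words of length at most `n`. -/
noncomputable def classCount {α : Type} (r : List α → List α → Prop) (n : ℕ) : ℕ :=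
  Set.ncard {C : Set (List α) | ∃ x : List α, x.length ≤ n ∧ C = {y | r x y}}

/-- A relation has finite index if it has finitely many classes. -/
def FiniteIndex {α : Type} (r : List α → List α → Prop) : Prop :=
  Set.Finite {C : Set (List α) | ∃ x : List α, C = {y | r x y}}

/-- Critical tuple in a right congruence. -/
def IsCriticalTuple {α : Type} (r : List α → List α → Prop) (u₂ v₂ u v : List α) : Prop :=
  1 ≤ u₂.length ∧ u₂.length = v₂.length ∧ u₂ <:+ u ∧ v₂ <:+ v ∧
  ∀ w ∈ UVStar u v, ¬ r (u₂ ++ w) (v₂ ++ w)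

/-- The Myhill–Nerode right congruence of a language. -/
def MNrel {α : Type} (L : Set (List α)) (x y : List α) : Prop :=
  ∀ z : List α, x ++ z ∈ L ↔ y ++ z ∈ L

/-! ### Suffix distance and the canonical right congruence of a rational function -/

/-- Longest common prefix. -/
def cpre {β : Type} [DecidableEq β] : List β → List β → List β
  | a :: x, b :: y => if a = b then a :: cpre x y else []
  | _, _ => []

/-- `‖x,y‖ = |x| + |y| − 2|x ∧ y|`, where `x ∧ y` is the longest common suffix. -/
def suffDist {β : Type} [DecidableEq β] (x y : List β) : ℕ :=
  x.length + y.length - 2 * (cpre x.reverse y.reverse).length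

/-- Value of a partial function (defaulting to the empty word off the domain). -/
def pval {α β : Type} (t : List α → Option (List β)) (x : List α) : List β :=
  (t x).getD []

/-- The right congruence `R_t` of Reutenauer–Schützenberger. -/
def Rt {α β : Type} [DecidableEq β] (t : List α → Option (List β)) (u v : List α) : Prop :=
  (∀ z : List α, u ++ z ∈ pdom t ↔ v ++ z ∈ pdom t) ∧
  Set.Finite {d : ℕ | ∃ w : List α, u ++ w ∈ pdom t ∧ v ++ w ∈ pdom t ∧
      d = suffDist (pval t (u ++ w)) (pval t (v ++ w))}

/-- Two partial functions are adjacent. -/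
def Adjacent {α β : Type} [DecidableEq β] (t₁ t₂ : List α → Option (List β)) : Prop :=
  Set.Finite {d : ℕ | ∃ w : List α, w ∈ pdom t₁ ∧ w ∈ pdom t₂ ∧
      d = suffDist (pval t₁ w) (pval t₂ w)}

/-! ### Visibly pushdown automata -/

/-- Kinds of letters of a pushdown alphabet. -/
inductive VPKind : Type
  | call : VPKind
  | ret : VPKind
  | intern : VPKind
deriving DecidableEq

/-- A visibly pushdown automaton over the pushdown alphabet determined by `pa`.
The bottom-of-stack symbol `⊥` is represented implicitly by the empty stack. -/
structure VPA (α : Type) (pa : α → VPKind) where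
  Q : Type
  finQ : Fintype Q
  Γ : Type
  finΓ : Fintype Γ
  q₀ : Q
  F : Set Q
  δc : Q → α → Γ × Q
  δr : Q → α → Option Γ → Q
  δi : Q → α → Q

namespace VPA

variable {α : Type} {pa : α → VPKind}

/-- One step of the VPA on a configuration (stack with top at the head, state). -/
def step (A : VPA α pa) (c : List A.Γ × A.Q) (a : α) : List A.Γ × A.Q :=
  match pa a with
  | VPKind.call => ((A.δc c.2 a).1 :: c.1, (A.δc c.2 a).2)
  | VPKind.intern => (c.1, A.δi c.2 a)
  | VPKind.ret =>
    match c.1 with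
    | [] => ([], A.δr c.2 a none)
    | γ :: st => (st, A.δr c.2 a (some γ))

/-- Extended transition function on words. -/
def run (A : VPA α pa) (c : List A.Γ × A.Q) (w : List α) : List A.Γ × A.Q :=
  w.foldl A.step c

/-- The language accepted by a VPA (from the initial configuration `⊥q₀`). -/
def acceptsLang (A : VPA α pa) : Set (List α) :=
  {w | (A.run ([], A.q₀) w).2 ∈ A.F}

/-- Language accepted from a configuration. -/
def AccLang (A : VPA α pa) (c : List A.Γ × A.Q) : Set (List α) :=
  {w | (A.run c w).2 ∈ A.F}

/-- The reachable configurations. -/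
def rConf (A : VPA α pa) : Set (List A.Γ × A.Q) :=
  Set.range (fun w => A.run ([], A.q₀) w)

end VPA

/-- A language is a visibly pushdown language over the pushdown alphabet `pa`. -/
def IsVPL {α : Type} (pa : α → VPKind) (L : Set (List α)) : Prop :=
  ∃ A : VPA α pa, L = A.acceptsLang

/-- Well-matched words over a pushdown alphabet. -/
inductive WellMatched {α : Type} (pa : α → VPKind) : List α → Prop
  | nil : WellMatched pa []
  | intern (a : α) : pa a = VPKind.intern → WellMatched pa [a]
  | append {u v : List α} : WellMatched pa u → WellMatched pa v → WellMatched pa (u ++ v)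
  | wrap {w : List α} {a b : α} : WellMatched pa w → pa a = VPKind.call → pa b = VPKind.ret →
      WellMatched pa (a :: (w ++ [b]))

/-- Descending words: concatenations of well-matched words and return letters. -/
def Descending {α : Type} (pa : α → VPKind) (w : List α) : Prop :=
  ∃ l : List (List α),
    (∀ p ∈ l, WellMatched pa p ∨ ∃ b : α, pa b = VPKind.ret ∧ p = [b]) ∧ w = l.flatten

/-- Length-lexicographic order on configurations `⊥αq` (stacks compared bottom-first). -/
def ConfLe {Q Γ : Type} (ltQ : LinearOrder Q) (ltΓ : LinearOrder Γ)
    (c d : List Γ × Q) : Prop :=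
  c.1.length < d.1.length ∨
    (c.1.length = d.1.length ∧
      (List.Lex ltΓ.lt c.1.reverse d.1.reverse ∨ (c.1 = d.1 ∧ ltQ.le c.2 d.2)))

/-- `rep` chooses from each equivalence class of reachable configurations the
length-lexicographically least representative. -/
def IsRepFun {α : Type} {pa : α → VPKind} (A : VPA α pa)
    (ltQ : LinearOrder A.Q) (ltΓ : LinearOrder A.Γ)
    (rep : List A.Γ × A.Q → List A.Γ × A.Q) : Prop :=
  ∀ c ∈ A.rConf, rep c ∈ A.rConf ∧ A.AccLang (rep c) = A.AccLang c ∧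
    ∀ c' ∈ A.rConf, A.AccLang c' = A.AccLang c → ConfLe ltQ ltΓ (rep c) c'

/-- `ν_A(w)`: the representative of the configuration reached on `w`. -/
def nuA {α : Type} {pa : α → VPKind} (A : VPA α pa)
    (rep : List A.Γ × A.Q → List A.Γ × A.Q) (w : List α) : List A.Γ × A.Q :=
  rep (A.run ([], A.q₀) w)

/-- `σ₀(w)`: the states representing the Myhill–Nerode classes of the nonempty suffixes. -/
def sigma0 {α : Type} {pa : α → VPKind} (A : VPA α pa)
    (rep : List A.Γ × A.Q → List A.Γ × A.Q) (w : List α) : List A.Q :=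
  w.tails.dropLast.map fun s => (nuA A rep s).2

/-- `φ(w)`: the state transformation of a well-matched word. -/
def phiVPA {α : Type} {pa : α → VPKind} (A : VPA α pa) (w : List α) : A.Q → A.Q :=
  fun p => (A.run ([], p) w).2

/-- `σ₁(w) = φ(w) q₂ ⋯ qₙ`, a word over the alphabet `Q^Q ∪ Q`. -/
def sigma1 {α : Type} {pa : α → VPKind} (A : VPA α pa)
    (rep : List A.Γ × A.Q → List A.Γ × A.Q) (w : List α) : List ((A.Q → A.Q) ⊕ A.Q) :=
  Sum.inl (phiVPA A w) :: ((sigma0 A rep w).tail.map Sum.inr)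

/-! ### Real-time right transducers -/

/-- A real-time right transducer (reads its input from right to left). -/
structure RightTransducer (α β : Type) where
  Q : Type
  finQ : Fintype Q
  F : Set Q
  I : Set Q
  Δ : Set (Q × α × List β × Q)
  finΔ : Δ.Finite
  o : Q → List β

namespace RightTransducer

variable {α β : Type}

/-- Input word of a sequence of transitions. -/
def inputOf {Q : Type} (ts : List (Q × α × List β × Q)) : List α :=
  ts.map fun tr => tr.2.1

/-- Output word of a sequence of transitions. -/
def outputOf {Q : Type} (ts : List (Q × α × List β × Q)) : List β :=
  (ts.map fun tr => tr.2.2.1).flatten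

/-- `IsRunFrom A q ts p`: `ts` is a run on its input from the (rightmost) state `p`
to the (leftmost) state `q`; the transitions are listed left to right. -/
def IsRunFrom (A : RightTransducer α β) : A.Q → List (A.Q × α × List β × A.Q) → A.Q → Prop
  | q, [], p => q = p
  | q, tr :: ts, p => tr ∈ A.Δ ∧ tr.1 = q ∧ IsRunFrom A tr.2.2.2 ts p

/-- There is a run on `w` from `p` (right) to `q` (left). -/
def RunOn (A : RightTransducer α β) (q : A.Q) (w : List α) (p : A.Q) : Prop :=
  ∃ ts, A.IsRunFrom q ts p ∧ inputOf ts = w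

/-- `q ⪯ p`: there is a run from `p` to `q`. -/
def Below (A : RightTransducer α β) (q p : A.Q) : Prop :=
  ∃ w, A.RunOn q w p

/-- The partial function defined by a right transducer. -/
def Defines (A : RightTransducer α β) (t : List α → Option (List β)) : Prop :=
  ∀ x y, t x = some y ↔ ∃ p q ts, p ∈ A.F ∧ q ∈ A.I ∧ A.IsRunFrom p ts q ∧
    inputOf ts = x ∧ y = A.o p ++ outputOf ts

/-- Every state occurs on some initial accepting run. -/
def Trim (A : RightTransducer α β) : Prop :=
  ∀ s : A.Q, ∃ p q ts₁ ts₂, p ∈ A.F ∧ q ∈ A.I ∧ A.IsRunFrom p ts₁ s ∧ A.IsRunFrom s ts₂ q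

/-- Every input word has at most one initial accepting run. -/
def Unambiguous (A : RightTransducer α β) : Prop :=
  ∀ p p' q q' ts ts', p ∈ A.F → p' ∈ A.F → q ∈ A.I → q' ∈ A.I →
    A.IsRunFrom p ts q → A.IsRunFrom p' ts' q' → inputOf ts = inputOf ts' →
    p = p' ∧ ts = ts'

/-- `w` is guarded by `p`: some run on `w` from `p` stays in the SCC of `p`. -/
def Guarded (A : RightTransducer α β) (p : A.Q) (w : List α) : Prop :=
  ∃ q', A.RunOn q' w p ∧ A.Below p q'

/-- The transducer is well-behaved: the terminal outputs of guarded accepting runs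
from the same state on words of equal length coincide. -/
def WellBehaved (A : RightTransducer α β) : Prop :=
  ∀ (p q q' : A.Q) ts ts', q ∈ A.F → q' ∈ A.F →
    A.IsRunFrom q ts p → A.IsRunFrom q' ts' p →
    A.Guarded p (inputOf ts) → A.Guarded p (inputOf ts') →
    (inputOf ts).length = (inputOf ts').length →
    A.o q ++ outputOf ts = A.o q' ++ outputOf ts'

end RightTransducer

/-! ### The Parikh-like map Ψ -/

/-- `Ψ(w)`: each letter of `w` paired with its position counted from the right (1-based). -/
def Psi {α : Type} (w : List α) : Set (α × ℕ) :=
  {p | ∃ i : ℕ, w[i]? = some p.1 ∧ p.2 = w.length - i}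

/-- `Ψ(L) = ⋃_{w ∈ L} Ψ(w)`. -/
def PsiL {α : Type} (L : Set (List α)) : Set (α × ℕ) :=
  ⋃ w ∈ L, Psi w


/-!
Take a transducer for `t` and simulate it letter by letter; the simulation has finitely many
configurations. If `w` is long, the accepting runs on `uw` and `vw` pass through the same pair
of configurations at two positions of `w`, so `w = w₁w₂w₃` with `t(uw₁w₂ᵏw₃) = a bᵏ c` and
`t(vw₁w₂ᵏw₃) = a' b'ᵏ c'` for all `k`. As `u R_t v`, these pairs stay at bounded suffix distance;
this forces `|b| = |b'|` and a conjugacy `b r = r b'` that makes the distance independent of `k`.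
Hence `w` may be replaced by the shorter `w₁w₃`, down to `|w|` below a constant, where the bound
`|t(x)| ≤ K (|x| + 1)` (shortest runs revisit no configuration at the same input position)
finishes the proof.
-/

section PrefixDistance

variable {γ : Type} [DecidableEq γ]

def prefDist (x y : List γ) : ℕ := x.length + y.length - 2 * (cpre x y).length

theorem cpre_comm (x y : List γ) : cpre x y = cpre y x := by
  induction x generalizing y with
  | nil => cases y <;> rfl
  | cons a x ih =>
    cases y with
    | nil => rfl
    | cons b y =>
      by_cases hab : a = b
      · subst hab; simp [cpre, ih]
      · simp [cpre, hab, Ne.symm hab]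

theorem cpre_prefix_left (x y : List γ) : cpre x y <+: x := by
  induction x generalizing y with
  | nil => cases y <;> simp [cpre]
  | cons a x ih =>
    cases y with
    | nil => simp [cpre]
    | cons b y =>
      by_cases hab : a = b
      · simpa [cpre, hab] using ih y
      · simp [cpre, hab]

theorem cpre_prefix_right (x y : List γ) : cpre x y <+: y :=
  cpre_comm x y ▸ cpre_prefix_left y x

theorem cpre_append_left (z x y : List γ) : cpre (z ++ x) (z ++ y) = z ++ cpre x y := by
  induction z with
  | nil => rfl
  | cons a z ih => simp [cpre, ih]

theorem prefDist_comm (x y : List γ) : prefDist x y = prefDist y x := by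
  rw [prefDist, prefDist, cpre_comm, Nat.add_comm]

theorem prefDist_append_left (z x y : List γ) : prefDist (z ++ x) (z ++ y) = prefDist x y := by
  have := (cpre_prefix_left x y).length_le
  simp only [prefDist, cpre_append_left, List.length_append]
  omega

theorem length_le_prefDist_add (x y : List γ) : x.length ≤ prefDist x y + y.length := by
  have := (cpre_prefix_right x y).length_le
  unfold prefDist
  omega

theorem take_eq_take_of_prefDist_le {x y : List γ} {D m : ℕ} (h : prefDist x y ≤ D)
    (hx : m + D ≤ x.length) (hy : m + D ≤ y.length) : x.take m = y.take m := by
  have hm : m ≤ (cpre x y).length := by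
    have := (cpre_prefix_left x y).length_le
    unfold prefDist at h
    omega
  have htake : ∀ z, cpre x y <+: z → z.take m = (cpre x y).take m := fun _ ⟨_, hz⟩ =>
    hz ▸ List.take_append_of_le_length hm
  rw [htake x (cpre_prefix_left x y), htake y (cpre_prefix_right x y)]

theorem suffDist_eq_prefDist_reverse (x y : List γ) :
    suffDist x y = prefDist x.reverse y.reverse := by
  simp [suffDist, prefDist]

end PrefixDistance

section WordPowers

variable {τ : Type}

def wpow (w : List τ) (k : ℕ) : List τ := (List.replicate k w).flatten

@[simp] theorem wpow_zero (w : List τ) : wpow w 0 = [] := rfl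

@[simp] theorem wpow_one (w : List τ) : wpow w 1 = w := by simp [wpow]

theorem wpow_succ (w : List τ) (k : ℕ) : wpow w (k + 1) = w ++ wpow w k := by
  simp [wpow, List.replicate_succ]

theorem wpow_succ' (w : List τ) (k : ℕ) : wpow w (k + 1) = wpow w k ++ w := by
  simp [wpow, List.replicate_succ']

@[simp] theorem length_wpow (w : List τ) (k : ℕ) : (wpow w k).length = k * w.length := by
  simp [wpow]

theorem reverse_wpow (w : List τ) (k : ℕ) : (wpow w k).reverse = wpow w.reverse k := by
  induction k with
  | zero => rfl
  | succ k ih => rw [wpow_succ, List.reverse_append, ih, wpow_succ']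

theorem flatten_map_wpow {ρ : Type} (f : τ → List ρ) (w : List τ) (k : ℕ) :
    ((wpow w k).map f).flatten = wpow (w.map f).flatten k := by
  induction k with
  | zero => rfl
  | succ k ih => rw [wpow_succ, wpow_succ, List.map_append, List.flatten_append, ih]

variable [DecidableEq τ]

theorem length_eq_of_prefDist_wpow_le {p p' b b' s s' : List τ} {D : ℕ}
    (h : ∀ k, prefDist (p ++ (wpow b k ++ s)) (p' ++ (wpow b' k ++ s')) ≤ D) :
    b.length = b'.length := by
  by_contra hne
  set K := D + p.length + p'.length + s.length + s'.length + 1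
  have h₁ := length_le_prefDist_add (p ++ (wpow b K ++ s)) (p' ++ (wpow b' K ++ s'))
  have h₂ := length_le_prefDist_add (p' ++ (wpow b' K ++ s')) (p ++ (wpow b K ++ s))
  rw [prefDist_comm] at h₂
  have hK := h K
  simp only [List.length_append, length_wpow] at h₁ h₂
  rcases Nat.lt_or_gt_of_ne hne with hlt | hlt
  · have := Nat.mul_le_mul_left K hlt
    rw [Nat.mul_succ] at this
    omega
  · have := Nat.mul_le_mul_left K hlt
    rw [Nat.mul_succ] at this
    omega

theorem exists_conj_of_prefDist_wpow_le {p p' b b' s s' : List τ} {D : ℕ}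
    (h : ∀ k, prefDist (p ++ (wpow b k ++ s)) (p' ++ (wpow b' k ++ s')) ≤ D)
    (hb : 0 < b.length) (hlen : b.length = b'.length) (hp : p.length ≤ p'.length) :
    ∃ r, p' = p ++ r ∧ r ++ b' = b ++ r := by
  set K := D + p'.length
  obtain ⟨δ, hδ⟩ := Nat.exists_eq_add_of_le hp
  have hK : K ≤ K * b.length := Nat.le_mul_of_pos_right K hb
  have hδK : δ ≤ (wpow b K).length := by rw [length_wpow]; omega
  have hX : p'.length + b.length + D ≤ (p ++ (wpow b (K + 1) ++ s)).length := by
    simp only [List.length_append, length_wpow, Nat.succ_mul]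
    omega
  have hY : p'.length + b.length + D ≤ (p' ++ (wpow b' (K + 1) ++ s')).length := by
    simp only [List.length_append, length_wpow, Nat.succ_mul, ← hlen]
    omega
  have e₁ := take_eq_take_of_prefDist_le (h (K + 1)) (m := p'.length) (by omega) (by omega)
  have e₂ := take_eq_take_of_prefDist_le (h (K + 1)) (m := p'.length + b.length)
    (by omega) (by omega)
  rw [List.take_left] at e₁
  rw [List.take_length_add_append, wpow_succ b', List.append_assoc b',
    List.take_left' hlen.symm] at e₂
  rw [hδ, List.take_length_add_append, wpow_succ', List.append_assoc,
    List.take_append_of_le_length hδK] at e₁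
  rw [hδ, Nat.add_assoc, List.take_length_add_append, Nat.add_comm δ, wpow_succ,
    List.append_assoc, List.take_length_add_append, List.take_append_of_le_length hδK,
    ← e₁, List.append_assoc] at e₂
  exact ⟨(wpow b K).take δ, e₁.symm, (List.append_cancel_left e₂).symm⟩

theorem prefDist_eq_of_forall_wpow_le {p p' b b' s s' : List τ} {D : ℕ}
    (h : ∀ k, prefDist (p ++ (wpow b k ++ s)) (p' ++ (wpow b' k ++ s')) ≤ D) :
    prefDist (p ++ (b ++ s)) (p' ++ (b' ++ s')) = prefDist (p ++ s) (p' ++ s') := by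
  have hlen := length_eq_of_prefDist_wpow_le h
  rcases Nat.eq_zero_or_pos b.length with hb | hb
  · obtain rfl : b = [] := List.length_eq_zero_iff.mp hb
    obtain rfl : b' = [] := List.length_eq_zero_iff.mp (by omega)
    rfl
  wlog hp : p.length ≤ p'.length generalizing p p' b b' s s'
  · rw [prefDist_comm, prefDist_comm (p ++ s)]
    exact this (fun k => (prefDist_comm _ _).trans_le (h k)) hlen.symm (hlen ▸ hb) (by omega)
  obtain ⟨r, rfl, hr⟩ := exists_conj_of_prefDist_wpow_le h hb hlen hp
  have hloop : p ++ r ++ (b' ++ s') = p ++ (b ++ (r ++ s')) := by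
    rw [List.append_assoc, ← List.append_assoc r, hr, List.append_assoc]
  rw [hloop]
  simp only [List.append_assoc, prefDist_append_left]

theorem suffDist_eq_of_forall_wpow_le {a a' b b' c c' : List τ} {D : ℕ}
    (h : ∀ k, suffDist (a ++ (wpow b k ++ c)) (a' ++ (wpow b' k ++ c')) ≤ D) :
    suffDist (a ++ (b ++ c)) (a' ++ (b' ++ c')) = suffDist (a ++ c) (a' ++ c') := by
  simp only [suffDist_eq_prefDist_reverse, List.reverse_append, List.append_assoc] at h ⊢
  simp only [reverse_wpow] at h
  exact prefDist_eq_of_forall_wpow_le h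

end WordPowers

namespace Transducer

variable {α β : Type} (A : Transducer α β)

/-- Letter-by-letter simulation of `A`: in the configuration `(s, q)` the word `s` is still
to be read before the run reaches the state `q`. -/
inductive Step : List α × A.Q → List α → List β → List α × A.Q → Prop
  | fire {p : A.Q} {x : List α} {y : List β} {q : A.Q} :
      (p, x, y, q) ∈ A.Δ → Step ([], p) [] y (x, q)
  | read (a : α) (s : List α) (q : A.Q) : Step (a :: s, q) [a] [] (s, q)

def IsPath : List α × A.Q → List (List α × List β × (List α × A.Q)) → List α × A.Q → Prop
  | c, [], c' => c = c'
  | c, e :: es, c' => A.Step c e.1 e.2.1 e.2.2 ∧ IsPath e.2.2 es c'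

variable {Q : Type}

def pathIn (es : List (List α × List β × Q)) : List α := (es.map Prod.fst).flatten

def pathOut (es : List (List α × List β × Q)) : List β := (es.map fun e => e.2.1).flatten

@[simp] theorem pathIn_nil : pathIn ([] : List (List α × List β × Q)) = [] := rfl

@[simp] theorem pathOut_nil : pathOut ([] : List (List α × List β × Q)) = [] := rfl

@[simp] theorem pathIn_cons (e : List α × List β × Q) (es : List (List α × List β × Q)) :
    pathIn (e :: es) = e.1 ++ pathIn es := rfl

@[simp] theorem pathOut_cons (e : List α × List β × Q) (es : List (List α × List β × Q)) :
    pathOut (e :: es) = e.2.1 ++ pathOut es := rfl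

@[simp] theorem pathIn_append (es fs : List (List α × List β × Q)) :
    pathIn (es ++ fs) = pathIn es ++ pathIn fs := by simp [pathIn]

@[simp] theorem pathOut_append (es fs : List (List α × List β × Q)) :
    pathOut (es ++ fs) = pathOut es ++ pathOut fs := by simp [pathOut]

@[simp] theorem pathIn_wpow (es : List (List α × List β × Q)) (k : ℕ) :
    pathIn (wpow es k) = wpow (pathIn es) k := flatten_map_wpow _ es k

@[simp] theorem pathOut_wpow (es : List (List α × List β × Q)) (k : ℕ) :
    pathOut (wpow es k) = wpow (pathOut es) k := flatten_map_wpow _ es k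

variable {A}

theorem Step.length_input_le_one {c c' : List α × A.Q} {x : List α} {y : List β}
    (h : A.Step c x y c') : x.length ≤ 1 := by
  cases h <;> simp

theorem IsPath.append {c c' c'' : List α × A.Q} {es fs : List (List α × List β × (List α × A.Q))}
    (h : A.IsPath c es c') (h' : A.IsPath c' fs c'') : A.IsPath c (es ++ fs) c'' := by
  induction es generalizing c with
  | nil => exact h ▸ h'
  | cons e es ih => exact ⟨h.1, ih h.2⟩

theorem IsPath.of_append {c c'' : List α × A.Q} {es fs : List (List α × List β × (List α × A.Q))}
    (h : A.IsPath c (es ++ fs) c'') : ∃ c', A.IsPath c es c' ∧ A.IsPath c' fs c'' := by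
  induction es generalizing c with
  | nil => exact ⟨c, rfl, h⟩
  | cons e es ih =>
    obtain ⟨c', h₁, h₂⟩ := ih h.2
    exact ⟨c', ⟨h.1, h₁⟩, h₂⟩

theorem IsPath.target_unique {c c' c'' : List α × A.Q} {es : List (List α × List β × (List α × A.Q))}
    (h : A.IsPath c es c') (h' : A.IsPath c es c'') : c' = c'' := by
  induction es generalizing c with
  | nil => exact h.symm.trans h'
  | cons e es ih => exact ih h.2 h'.2

theorem IsPath.wpow_loop {c : List α × A.Q} {es : List (List α × List β × (List α × A.Q))}
    (h : A.IsPath c es c) (k : ℕ) : A.IsPath c (wpow es k) c := by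
  induction k with
  | zero => rfl
  | succ k ih => rw [wpow_succ]; exact h.append ih

theorem IsPath.pump {c c' m : List α × A.Q} {G M H : List (List α × List β × (List α × A.Q))}
    (h : A.IsPath c (G ++ (M ++ H)) c') (hG : A.IsPath c G m) (hGM : A.IsPath c (G ++ M) m)
    (k : ℕ) : A.IsPath c (G ++ (wpow M k ++ H)) c' := by
  obtain ⟨m₁, hG₁, hMH⟩ := h.of_append
  obtain rfl := hG.target_unique hG₁
  obtain ⟨m₂, hM, hH⟩ := hMH.of_append
  obtain ⟨m₃, hG₃, hloop⟩ := hGM.of_append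
  obtain rfl := hG.target_unique hG₃
  obtain rfl := hM.target_unique hloop
  exact hG.append ((hloop.wpow_loop k).append hH)

theorem exists_isPath_read (s : List α) (q : A.Q) :
    ∃ es, A.IsPath (s, q) es ([], q) ∧ pathIn es = s ∧ pathOut es = [] := by
  induction s with
  | nil => exact ⟨[], rfl, rfl, rfl⟩
  | cons a s ih =>
    obtain ⟨es, hes, hin, hout⟩ := ih
    exact ⟨([a], [], (s, q)) :: es, ⟨Step.read a s q, hes⟩, by simp [hin], by simp [hout]⟩

theorem Run.exists_isPath {p q : A.Q} {x : List α} {y : List β} (h : A.Run p x y q) :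
    ∃ es, A.IsPath ([], p) es ([], q) ∧ pathIn es = x ∧ pathOut es = y := by
  induction h with
  | nil q => exact ⟨[], rfl, rfl, rfl⟩
  | @cons p q r x₁ x y₁ y hd _ ih =>
    obtain ⟨es, hes, hin, hout⟩ := ih
    obtain ⟨fs, hfs, hfin, hfout⟩ := exists_isPath_read (A := A) x₁ q
    refine ⟨([], y₁, (x₁, q)) :: (fs ++ es), ⟨Step.fire hd, hfs.append hes⟩, ?_, ?_⟩ <;>
      simp [hin, hout, hfin, hfout]

theorem IsPath.exists_run {s : List α} {p q : A.Q}
    {es : List (List α × List β × (List α × A.Q))} (h : A.IsPath (s, p) es ([], q)) :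
    ∃ x, pathIn es = s ++ x ∧ A.Run p x (pathOut es) q := by
  induction es generalizing s p with
  | nil =>
    cases h
    exact ⟨[], rfl, Run.nil q⟩
  | cons e es ih =>
    obtain ⟨hstep, hes⟩ := h
    rcases e with ⟨x₁, y₁, s', p'⟩
    cases hstep with
    | fire hd =>
      obtain ⟨x, hin, hrun⟩ := ih hes
      exact ⟨s' ++ x, by simp [hin], by simpa using Run.cons hd hrun⟩
    | read a s' _ =>
      obtain ⟨x, hin, hrun⟩ := ih hes
      exact ⟨x, by simp [hin], by simpa using hrun⟩

theorem IsPath.run {p q : A.Q} {es : List (List α × List β × (List α × A.Q))}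
    (h : A.IsPath ([], p) es ([], q)) : A.Run p (pathIn es) (pathOut es) q := by
  obtain ⟨x, hin, hrun⟩ := h.exists_run
  rwa [hin]


variable (A) in
def configs : Set (List α × A.Q) := {c | c.1 = [] ∨ ∃ d ∈ A.Δ, c.1 <:+ d.2.1}

variable (A) in
theorem configs_finite : A.configs.Finite := by
  classical
  have := A.finQ
  have hS : ({[]} ∪ ⋃ d ∈ A.Δ, {s : List α | s <:+ d.2.1}).Finite :=
    (Set.finite_singleton _).union <| A.finΔ.biUnion fun d _ =>
      d.2.1.tails.toFinset.finite_toSet.subset fun s hs => by simpa using hs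
  refine (hS.prod Set.finite_univ).subset fun c hc => ⟨?_, trivial⟩
  simpa [configs] using hc

theorem Step.mem_configs {c c' : List α × A.Q} {x : List α} {y : List β}
    (h : A.Step c x y c') (hc : c ∈ A.configs) : c' ∈ A.configs := by
  cases h with
  | fire hd => exact Or.inr ⟨_, hd, List.suffix_refl _⟩
  | read a s q =>
    obtain ⟨d, hd, hs⟩ := hc.resolve_left (List.cons_ne_nil a s)
    exact Or.inr ⟨d, hd, (List.suffix_cons a s).trans hs⟩

theorem IsPath.mem_configs {c c' : List α × A.Q} {es : List (List α × List β × (List α × A.Q))}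
    (h : A.IsPath c es c') (hc : c ∈ A.configs) : c' ∈ A.configs := by
  induction es generalizing c with
  | nil => exact h ▸ hc
  | cons e es ih => exact ih h.2 (h.1.mem_configs hc)

/-- Holds because every step reads at most one letter. -/
theorem IsPath.exists_split_input {c c' : List α × A.Q}
    {es : List (List α × List β × (List α × A.Q))} (h : A.IsPath c es c') {z₁ z₂ : List α}
    (hin : pathIn es = z₁ ++ z₂) :
    ∃ G H m, es = G ++ H ∧ A.IsPath c G m ∧ A.IsPath m H c' ∧ pathIn G = z₁ ∧ pathIn H = z₂ := by
  induction es generalizing c z₁ with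
  | nil =>
    obtain ⟨rfl, rfl⟩ := List.append_eq_nil_iff.mp hin.symm
    exact ⟨[], [], c, rfl, rfl, h, rfl, rfl⟩
  | cons e es ih =>
    rcases z₁ with _ | ⟨a, z₁⟩
    · exact ⟨[], e :: es, c, rfl, rfl, h, rfl, hin⟩
    have hone := h.1.length_input_le_one
    rcases e with ⟨_ | ⟨b, _ | _⟩, y, d⟩
    · obtain ⟨G, H, m, rfl, hG, hH, hGin, hHin⟩ := ih h.2 hin
      exact ⟨_ :: G, H, m, rfl, ⟨h.1, hG⟩, hH, hGin, hHin⟩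
    · obtain ⟨rfl, hin'⟩ : b = a ∧ pathIn es = z₁ ++ z₂ := by simpa using hin
      obtain ⟨G, H, m, rfl, hG, hH, hGin, hHin⟩ := ih h.2 hin'
      exact ⟨_ :: G, H, m, rfl, ⟨h.1, hG⟩, hH, by simp [hGin], hHin⟩
    · simp at hone

theorem exists_step_output_le (A : Transducer α β) :
    ∃ M, ∀ c x y c', A.Step c x y c' → y.length ≤ M := by
  obtain ⟨M, hM⟩ := (A.finΔ.image fun d => d.2.2.1.length).bddAbove
  refine ⟨M, fun c x y c' h => ?_⟩
  cases h with
  | fire hd => exact hM ⟨_, hd, rfl⟩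
  | read => exact Nat.zero_le M

theorem IsPath.length_pathOut_le {M : ℕ} (hM : ∀ c x y c', A.Step c x y c' → y.length ≤ M)
    {c c' : List α × A.Q} {es : List (List α × List β × (List α × A.Q))}
    (h : A.IsPath c es c') : (pathOut es).length ≤ M * es.length := by
  induction es generalizing c with
  | nil => simp
  | cons e es ih =>
    have := hM _ _ _ _ h.1
    have := ih h.2
    simp only [pathOut_cons, List.length_append, List.length_cons, Nat.mul_succ]
    omega

/-- A path visiting the same configuration twice at the same input position contains a
removable loop. -/
theorem IsPath.exists_short {c c' : List α × A.Q} {es : List (List α × List β × (List α × A.Q))}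
    (h : A.IsPath c es c') (hc : c ∈ A.configs) :
    ∃ fs, A.IsPath c fs c' ∧ pathIn fs = pathIn es ∧
      fs.length ≤ ((pathIn es).length + 1) * A.configs.ncard := by
  induction hn : es.length using Nat.strong_induction_on generalizing es with
  | _ n ih =>
  by_cases hshort : n ≤ ((pathIn es).length + 1) * A.configs.ncard
  · exact ⟨es, h, rfl, hn ▸ hshort⟩
  have hsplit : ∀ i, ∃ m, A.IsPath c (es.take i) m := fun i =>
    ⟨_, (List.take_append_drop i es ▸ h).of_append.choose_spec.1⟩
  choose m hm using hsplit
  have hpre : ∀ i, pathIn (es.take i) <+: pathIn es := fun i =>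
    ⟨pathIn (es.drop i), by rw [← pathIn_append, List.take_append_drop]⟩
  obtain ⟨i, hi, j, hj, hij, heq⟩ := Set.exists_ne_map_eq_of_ncard_lt_of_maps_to
    (s := Set.Iic n) (t := Set.Iic (pathIn es).length ×ˢ A.configs)
    (f := fun i => ((pathIn (es.take i)).length, m i))
    (by rw [Set.ncard_prod]; simp; omega)
    (fun i _ => ⟨(hpre i).length_le, (hm i).mem_configs hc⟩)
    ((Set.finite_Iic _).prod A.configs_finite)
  simp only [Prod.mk.injEq] at heq
  wlog hlt : i < j generalizing i j
  · exact this j hj i hi hij.symm ⟨heq.1.symm, heq.2.symm⟩ (by omega)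
  have hj' : es.take j = es.take i ++ (es.drop i).take (j - i) := by
    rw [← List.take_add, Nat.add_sub_cancel' hlt.le]
  have hes : es = es.take i ++ ((es.drop i).take (j - i) ++ es.drop j) := by
    rw [← List.append_assoc, ← hj', List.take_append_drop]
  have hcut : A.IsPath c (es.take i ++ es.drop j) c' := by
    simpa using (hes ▸ h).pump (hm i) (hj' ▸ heq.2 ▸ hm j) 0
  have hin : pathIn (es.take i ++ es.drop j) = pathIn es := by
    have : pathIn (es.take i) = pathIn (es.take j) :=
      List.IsPrefix.eq_of_length ⟨_, by rw [hj', pathIn_append]⟩ heq.1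
    rw [pathIn_append, this, ← pathIn_append, List.take_append_drop]
  obtain ⟨fs, hfs, hfin, hflen⟩ := ih _ (by simp at hj ⊢; omega) hcut rfl
  exact ⟨fs, hfs, hfin.trans hin, hin ▸ hflen⟩

variable (A) in
theorem exists_length_output_le :
    ∃ K, ∀ x y, (x, y) ∈ A.T → ∃ y', (x, y') ∈ A.T ∧ y'.length ≤ K * (x.length + 1) := by
  have := A.finQ
  obtain ⟨M, hM⟩ := A.exists_step_output_le
  obtain ⟨Mo, hMo⟩ := (Set.finite_range fun q => (A.o q).length).bddAbove
  refine ⟨M * A.configs.ncard + Mo, fun x y ⟨p, q, z, hp, hq, hrun, _⟩ => ?_⟩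
  obtain ⟨es, hes, hin, -⟩ := hrun.exists_isPath
  obtain ⟨fs, hfs, hfin, hflen⟩ := hes.exists_short (Or.inl rfl)
  refine ⟨pathOut fs ++ A.o q, ⟨p, q, pathOut fs, hp, hq, hin ▸ hfin ▸ hfs.run, rfl⟩, ?_⟩
  have hout := hfs.length_pathOut_le hM
  have hoq : (A.o q).length ≤ Mo := hMo ⟨q, rfl⟩
  replace hflen : fs.length ≤ (x.length + 1) * A.configs.ncard := by simpa [hin] using hflen
  calc (pathOut fs ++ A.o q).length ≤ M * ((x.length + 1) * A.configs.ncard) + Mo * 1 := by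
        rw [List.length_append]
        have := Nat.mul_le_mul_left M hflen
        omega
    _ = M * A.configs.ncard * (x.length + 1) + Mo * 1 := by ring
    _ ≤ (M * A.configs.ncard + Mo) * (x.length + 1) := by
        rw [Nat.add_mul]
        gcongr
        omega

theorem pathIn_prefix {Q : Type} {G G' : List (List α × List β × Q)} (h : G <+: G') :
    pathIn G <+: pathIn G' := by
  obtain ⟨M, rfl⟩ := h
  exact ⟨pathIn M, (pathIn_append G M).symm⟩

/-- Configurations `m i` of an accepting run, at the input positions `|x| + i` within `w`:
a repetition `m i = m j` lets the factor of `w` between them be pumped. -/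
theorem exists_configs_pump {x w : List α} {y : List β} (h : (x ++ w, y) ∈ A.T) :
    ∃ m : ℕ → List α × A.Q, (∀ i, m i ∈ A.configs) ∧ ∀ i j, i < j → j ≤ w.length → m i = m j →
      ∃ a b c : List β, ∀ k,
        (x ++ (w.take i ++ (wpow ((w.drop i).take (j - i)) k ++ w.drop j)),
          a ++ (wpow b k ++ c)) ∈ A.T := by
  obtain ⟨p, q, z, hp, hq, hrun, rfl⟩ := h
  obtain ⟨es, hes, hin, -⟩ := hrun.exists_isPath
  have hsplit : ∀ i, ∃ G H m, es = G ++ H ∧ A.IsPath ([], p) G m ∧ A.IsPath m H ([], q) ∧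
      pathIn G = x ++ w.take i ∧ pathIn H = w.drop i := fun i =>
    hes.exists_split_input (by rw [hin, List.append_assoc, List.take_append_drop])
  choose G H m hGH hG hH hGin hHin using hsplit
  refine ⟨m, fun i => (hG i).mem_configs (Or.inl rfl), fun i j hij hj hm => ?_⟩
  have hlen : ∀ i, i ≤ w.length → (pathIn (G i)).length = x.length + i := fun i hi => by
    simp [hGin, hi]
  obtain ⟨M, hM⟩ : G i <+: G j := by
    rcases List.prefix_or_prefix_of_prefix ⟨_, (hGH i).symm⟩ ⟨_, (hGH j).symm⟩ with h | h
    · exact h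
    · have := (pathIn_prefix h).length_le
      rw [hlen i (by omega), hlen j hj] at this
      omega
  have hpath : A.IsPath ([], p) (G i ++ (M ++ H j)) ([], q) := by
    rwa [← List.append_assoc, hM, ← hGH j]
  have hloop : A.IsPath ([], p) (G i ++ M) (m i) := hM ▸ hm ▸ hG j
  have hMin : pathIn M = (w.drop i).take (j - i) := by
    have := hGin j
    rw [← hM, pathIn_append, hGin i, ← Nat.add_sub_cancel' hij.le, List.take_add,
      List.append_assoc] at this
    exact List.append_cancel_left (List.append_cancel_left this)
  refine ⟨pathOut (G i), pathOut M, pathOut (H j) ++ A.o q, fun k => ?_⟩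
  have hrun' := (hpath.pump (hG i) hloop k).run
  simp only [pathIn_append, pathIn_wpow, pathOut_append, pathOut_wpow, hGin, hMin, hHin,
    List.append_assoc] at hrun'
  exact ⟨p, q, _, hp, hq, hrun', by simp⟩

variable (A) in
theorem exists_pump : ∃ N, ∀ (u v w : List α) (yu yv : List β),
    (u ++ w, yu) ∈ A.T → (v ++ w, yv) ∈ A.T → N ≤ w.length →
    ∃ w₁ w₂ w₃, w = w₁ ++ (w₂ ++ w₃) ∧ w₂ ≠ [] ∧ ∃ au bu cu av bv cv : List β, ∀ k,
      (u ++ (w₁ ++ (wpow w₂ k ++ w₃)), au ++ (wpow bu k ++ cu)) ∈ A.T ∧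
      (v ++ (w₁ ++ (wpow w₂ k ++ w₃)), av ++ (wpow bv k ++ cv)) ∈ A.T := by
  refine ⟨A.configs.ncard * A.configs.ncard, fun u v w yu yv hu hv hw => ?_⟩
  obtain ⟨mu, hmu, hpu⟩ := exists_configs_pump hu
  obtain ⟨mv, hmv, hpv⟩ := exists_configs_pump hv
  obtain ⟨i, hi, j, hj, hij, heq⟩ := Set.exists_ne_map_eq_of_ncard_lt_of_maps_to
    (s := Set.Iic w.length) (t := A.configs ×ˢ A.configs) (f := fun i => (mu i, mv i))
    (by rw [Set.ncard_prod]; simp; omega) (fun i _ => ⟨hmu i, hmv i⟩)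
    (A.configs_finite.prod A.configs_finite)
  simp only [Prod.mk.injEq] at heq
  wlog hlt : i < j generalizing i j
  · exact this j hj i hi hij.symm ⟨heq.1.symm, heq.2.symm⟩ (by omega)
  rw [Set.mem_Iic] at hj
  obtain ⟨au, bu, cu, hku⟩ := hpu i j hlt hj heq.1
  obtain ⟨av, bv, cv, hkv⟩ := hpv i j hlt hj heq.2
  refine ⟨w.take i, (w.drop i).take (j - i), w.drop j, ?_, ?_,
    au, bu, cu, av, bv, cv, fun k => ⟨hku k, hkv k⟩⟩
  · rw [← List.append_assoc, ← List.take_add, Nat.add_sub_cancel' hlt.le, List.take_append_drop]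
  · rw [← List.length_pos_iff]
    simp
    omega

end Transducer

section RationalFunctions

variable {α β : Type} {t : List α → Option (List β)}

theorem mem_pdom_of_eq_some {x : List α} {y : List β} (h : t x = some y) : x ∈ pdom t := by
  simp [pdom, h]

theorem pval_eq_of_eq_some {x : List α} {y : List β} (h : t x = some y) : pval t x = y := by
  simp [pval, h]

theorem IsRationalFun.exists_length_pval_le (hrat : IsRationalFun t) :
    ∃ K, ∀ x ∈ pdom t, (pval t x).length ≤ K * (x.length + 1) := by
  obtain ⟨A, hA⟩ := hrat
  obtain ⟨K, hK⟩ := A.exists_length_output_le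
  refine ⟨K, fun x hx => ?_⟩
  obtain ⟨y, hy⟩ := Option.ne_none_iff_exists'.mp hx
  obtain ⟨y', hy', hlen⟩ := hK x y ((hA x y).mp hy)
  rwa [pval_eq_of_eq_some hy, Option.some.inj (hy.symm.trans ((hA x y').mpr hy'))]

theorem IsRationalFun.exists_pump (hrat : IsRationalFun t) :
    ∃ N, ∀ u v w : List α, u ++ w ∈ pdom t → v ++ w ∈ pdom t → N ≤ w.length →
    ∃ w₁ w₂ w₃, w = w₁ ++ (w₂ ++ w₃) ∧ w₂ ≠ [] ∧ ∃ au bu cu av bv cv : List β, ∀ k,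
      t (u ++ (w₁ ++ (wpow w₂ k ++ w₃))) = some (au ++ (wpow bu k ++ cu)) ∧
      t (v ++ (w₁ ++ (wpow w₂ k ++ w₃))) = some (av ++ (wpow bv k ++ cv)) := by
  obtain ⟨A, hA⟩ := hrat
  obtain ⟨N, hN⟩ := A.exists_pump
  refine ⟨N, fun u v w hu hv hw => ?_⟩
  obtain ⟨yu, hyu⟩ := Option.ne_none_iff_exists'.mp hu
  obtain ⟨yv, hyv⟩ := Option.ne_none_iff_exists'.mp hv
  obtain ⟨w₁, w₂, w₃, hw, hw₂, au, bu, cu, av, bv, cv, hk⟩ :=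
    hN u v w yu yv ((hA _ _).mp hyu) ((hA _ _).mp hyv) hw
  exact ⟨w₁, w₂, w₃, hw, hw₂, au, bu, cu, av, bv, cv,
    fun k => ⟨(hA _ _).mpr (hk k).1, (hA _ _).mpr (hk k).2⟩⟩

/-- Since `u R_t v`, the outputs along a pumping family of `w` stay at bounded distance. -/
theorem IsRationalFun.exists_shorter_suffDist_eq [DecidableEq β] (hrat : IsRationalFun t) :
    ∃ N, ∀ u v w : List α, u ++ w ∈ pdom t → v ++ w ∈ pdom t → Rt t u v → N ≤ w.length →
      ∃ w' : List α, w'.length < w.length ∧ u ++ w' ∈ pdom t ∧ v ++ w' ∈ pdom t ∧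
        suffDist (pval t (u ++ w)) (pval t (v ++ w)) =
          suffDist (pval t (u ++ w')) (pval t (v ++ w')) := by
  obtain ⟨N, hN⟩ := hrat.exists_pump
  refine ⟨N, fun u v w hu hv huv hw => ?_⟩
  obtain ⟨w₁, w₂, w₃, rfl, hw₂, au, bu, cu, av, bv, cv, hk⟩ := hN u v w hu hv hw
  obtain ⟨D, hD⟩ := huv.2.bddAbove
  have hbdd : ∀ k, suffDist (au ++ (wpow bu k ++ cu)) (av ++ (wpow bv k ++ cv)) ≤ D := fun k =>
    hD ⟨_, mem_pdom_of_eq_some (hk k).1, mem_pdom_of_eq_some (hk k).2,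
      by rw [pval_eq_of_eq_some (hk k).1, pval_eq_of_eq_some (hk k).2]⟩
  have h₁ := hk 1
  have h₀ := hk 0
  simp only [wpow_one, wpow_zero, List.nil_append] at h₁ h₀
  refine ⟨w₁ ++ w₃, ?_, mem_pdom_of_eq_some h₀.1, mem_pdom_of_eq_some h₀.2, ?_⟩
  · simp [List.length_pos_iff.mpr hw₂]
  · rw [pval_eq_of_eq_some h₁.1, pval_eq_of_eq_some h₁.2, pval_eq_of_eq_some h₀.1,
      pval_eq_of_eq_some h₀.2]
    exact suffDist_eq_of_forall_wpow_le hbdd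

end RationalFunctions

theorem statement11_general {α β : Type} [DecidableEq β]
    (t : List α → Option (List β)) (hrat : IsRationalFun t) :
    ∃ C : ℕ, ∀ u v w : List α, u ++ w ∈ pdom t → v ++ w ∈ pdom t → Rt t u v →
      suffDist (pval t (u ++ w)) (pval t (v ++ w)) ≤ C * (u.length + v.length + 2) := by
  obtain ⟨K, hK⟩ := hrat.exists_length_pval_le
  obtain ⟨N, hN⟩ := hrat.exists_shorter_suffDist_eq
  refine ⟨K * (N + 1), fun u v w => ?_⟩
  induction hn : w.length using Nat.strong_induction_on generalizing w with
  | _ n ih =>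
  intro hu hv huv
  by_cases hw : N ≤ n
  · obtain ⟨w', hw', hu', hv', heq⟩ := hN u v w hu hv huv (hn ▸ hw)
    exact heq ▸ ih _ (hn ▸ hw') w' rfl hu' hv' huv
  · calc suffDist (pval t (u ++ w)) (pval t (v ++ w))
        ≤ (pval t (u ++ w)).length + (pval t (v ++ w)).length := Nat.sub_le _ _
      _ ≤ K * ((u ++ w).length + 1) + K * ((v ++ w).length + 1) :=
          Nat.add_le_add (hK _ hu) (hK _ hv)
      _ ≤ K * (N + 1) * (u.length + v.length + 2) := by
          rw [List.length_append, List.length_append, ← Nat.mul_add, Nat.mul_assoc]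
          gcongr
          nlinarith

/-- short distances: for a rational function `t` with
suffix-closed domain there is a constant `C` such that `u R_t v` implies
`‖t(uw), t(vw)‖ ≤ C(|u| + |v| + 2)` whenever `uw, vw ∈ dom t`. -/
theorem statement11 {α β : Type} [Fintype α] [Fintype β] [DecidableEq β]
    (t : List α → Option (List β)) (hrat : IsRationalFun t)
    (hsc : SuffixClosed (pdom t)) :
    ∃ C : ℕ, ∀ u v w : List α, u ++ w ∈ pdom t → v ++ w ∈ pdom t → Rt t u v →
      suffDist (pval t (u ++ w)) (pval t (v ++ w)) ≤ C * (u.length + v.length + 2) :=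
  statement11_general t hrat
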